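/- Let T = {(t1,t2,t3,t4) ∈ (C*)^4 : t1t2t3t4 = 1} act on C[x1,x2,x3,x4] by t·xi = ti·xi. If I ⊆ C[x1,x2,x3,x4] is a T-invariant ideal such that the vanishing locus of I has dimension at most 1, then I is a monomial ideal (hence invariant under the full torus (C*)^4). -/

import Mathlib

open MvPolynomial

/-- The algebra automorphism of `ℂ[x₁,x₂,x₃,x₄]` given by scaling `xᵢ ↦ tᵢ·xᵢ`. -/
noncomputable def torusScale' (t : Fin 4 → ℂˣ) :
    MvPolynomial (Fin 4) ℂ →ₐ[ℂ] MvPolynomial (Fin 4) ℂ :=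
  aeval fun i => C (t i : ℂ) * X i

noncomputable def upoly : MvPolynomial (Fin 4) ℂ := ∏ i, X i

/-- scaling each monomial by `r ^ (w s)` -/
noncomputable def scW (w : (Fin 4 →₀ ℕ) → ℤ) (r : ℂˣ) (p : MvPolynomial (Fin 4) ℂ) :
    MvPolynomial (Fin 4) ℂ :=
  ⟨p.support, fun s => (r : ℂ) ^ (w s) * p.coeff s, by
    intro s
    simp [MvPolynomial.mem_support_iff, MvPolynomial.coeff,
      zpow_ne_zero _ (Units.ne_zero r)]⟩

lemma coeff_scW (w) (r : ℂˣ) (p) (s) : (scW w r p).coeff s = (r : ℂ) ^ (w s) * p.coeff s := rfl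


lemma torusScale'_monomial (t : Fin 4 → ℂˣ) (s : Fin 4 →₀ ℕ) (c : ℂ) :
    torusScale' t (monomial s c) = monomial s ((∏ i, (t i : ℂ) ^ (s i)) * c) := by
  rw [torusScale', aeval_monomial, monomial_eq]
  rw [Finsupp.prod_fintype _ _ (fun i => pow_zero _), Finsupp.prod_fintype _ _ (fun i => pow_zero _)]
  simp only [mul_pow, Finset.prod_mul_distrib, ← C_pow, ← map_prod]
  rw [map_mul, algebraMap_eq]
  ring

lemma coeff_torusScale' (t : Fin 4 → ℂˣ) (p : MvPolynomial (Fin 4) ℂ) (s : Fin 4 →₀ ℕ) :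
    (torusScale' t p).coeff s = (∏ i, (t i : ℂ) ^ (s i)) * p.coeff s := by
  conv_lhs => rw [p.as_sum, map_sum]
  rw [MvPolynomial.coeff_sum]
  simp only [torusScale'_monomial, coeff_monomial]
  rw [Finset.sum_ite_eq' p.support s (fun s' => (∏ i, (t i : ℂ) ^ (s' i)) * p.coeff s')]
  by_cases h : s ∈ p.support
  · simp [h]
  · simp [h, MvPolynomial.notMem_support_iff.mp h]

/-- weight function: exponent of variable `j` minus exponent of variable `3`. -/
def wj (j : Fin 4) (s : Fin 4 →₀ ℕ) : ℤ := (s j : ℤ) - (s 3 : ℤ)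

/-- the 1-parameter subgroup scaling variable `j` by `r` and variable `3` by `r⁻¹`. -/
def tj (j : Fin 4) (r : ℂˣ) : Fin 4 → ℂˣ := fun i => if i = j then r else if i = 3 then r⁻¹ else 1

lemma tj_prod (j : Fin 4) (hj : j ≠ 3) (r : ℂˣ) : (∏ i, tj j r i) = 1 := by
  fin_cases j <;> simp_all [tj, Fin.prod_univ_four]

lemma tj_char (j : Fin 4) (hj : j ≠ 3) (r : ℂˣ) (s : Fin 4 →₀ ℕ) :
    (∏ i, (tj j r i : ℂ) ^ (s i)) = (r : ℂ) ^ (wj j s) := by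
  have hr : (r : ℂ) ≠ 0 := Units.ne_zero r
  rw [wj, zpow_sub₀ hr, zpow_natCast, zpow_natCast]
  fin_cases j
  · simp [tj, Fin.prod_univ_four, div_eq_mul_inv, inv_pow]
  · simp [tj, Fin.prod_univ_four, div_eq_mul_inv, inv_pow]
  · simp [tj, Fin.prod_univ_four, div_eq_mul_inv, inv_pow]
  · exact absurd rfl hj

lemma scW_eq_torusScale (j : Fin 4) (hj : j ≠ 3) (r : ℂˣ) (p : MvPolynomial (Fin 4) ℂ) :
    scW (wj j) r p = torusScale' (tj j r) p := by
  apply MvPolynomial.ext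
  intro s
  rw [coeff_scW, coeff_torusScale', tj_char j hj r s]

open Classical in
/-- the weight-`k` component of `p` with respect to weight function `w`. -/
noncomputable def cw (w : (Fin 4 →₀ ℕ) → ℤ) (k : ℤ) (p : MvPolynomial (Fin 4) ℂ) :
    MvPolynomial (Fin 4) ℂ :=
  AddMonoidAlgebra.ofCoeff (Finsupp.filter (fun s => w s = k) (AddMonoidAlgebra.coeff p))

open Classical in
lemma coeff_cw (w) (k : ℤ) (p) (s) :
    (cw w k p).coeff s = if w s = k then p.coeff s else 0 := by
  rfl

lemma two_zpow_ne {k k1 : ℤ} (h : k ≠ k1) : (2:ℂ) ^ k ≠ (2:ℂ) ^ k1 := by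
  intro hc
  apply h
  have h2 : ((2:ℝ) : ℂ) ^ k = ((2:ℝ) : ℂ) ^ k1 := by push_cast; exact hc
  rw [← Complex.ofReal_zpow, ← Complex.ofReal_zpow] at h2
  exact zpow_right_injective₀ (by norm_num) (by norm_num) (Complex.ofReal_injective h2)

lemma core (I : Ideal (MvPolynomial (Fin 4) ℂ)) (w : (Fin 4 →₀ ℕ) → ℤ)
    (hw : ∀ (r : ℂˣ) p, p ∈ I → scW w r p ∈ I) :
    ∀ (d : ℕ) (p : MvPolynomial (Fin 4) ℂ), p ∈ I → (p.support.image w).card ≤ d →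
      ∀ k, cw w k p ∈ I := by
  intro d
  induction d with
  | zero =>
    intro p hp hcard k
    have h0 : p.support.image w = ∅ := Finset.card_eq_zero.mp (Nat.le_zero.mp hcard)
    have : p.support = ∅ := by
      by_contra h
      obtain ⟨s, hs⟩ := Finset.nonempty_iff_ne_empty.mpr h
      exact absurd (Finset.mem_image_of_mem w hs) (by simp [h0])
    have hp0 : p = 0 := by
      ext s; by_contra h; exact absurd (MvPolynomial.mem_support_iff.mpr (by simpa using h)) (by simp [this])
    have : cw w k p = 0 := by
      apply MvPolynomial.ext; intro s; rw [coeff_cw, hp0]; simp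
    rw [this]; exact I.zero_mem
  | succ d ih =>
    intro p hp hcard k
    by_cases hsub : (p.support.image w) ⊆ {k}
    · have : cw w k p = p := by
        apply MvPolynomial.ext
        intro s
        rw [coeff_cw]
        by_cases hs : s ∈ p.support
        · have : w s = k := by
            have := hsub (Finset.mem_image_of_mem w hs)
            simpa using this
          simp [this]
        · simp [MvPolynomial.notMem_support_iff.mp hs]
      rwa [this]
    · obtain ⟨k1, hk1mem, hk1ne⟩ : ∃ k1 ∈ p.support.image w, k1 ≠ k := by
        rw [Finset.not_subset] at hsub
        obtain ⟨k1, h1, h2⟩ := hsub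
        exact ⟨k1, h1, by simpa using h2⟩
      set u2 : ℂˣ := Units.mk0 (2:ℂ) two_ne_zero with hu2
      set q := scW w u2 p - ((2:ℂ)^k1) • p with hq
      have hqI : q ∈ I := Submodule.sub_mem I (hw u2 p hp) (by rw [MvPolynomial.smul_eq_C_mul]; exact Ideal.mul_mem_left I _ hp)
      have hcoq : ∀ s, q.coeff s = ((2:ℂ)^(w s) - (2:ℂ)^k1) * p.coeff s := by
        intro s
        rw [hq, MvPolynomial.coeff_sub, coeff_scW, MvPolynomial.coeff_smul]
        have : ((u2 : ℂ)) = 2 := rfl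
        rw [this, sub_mul]
        rfl
      have hsupp : q.support.image w ⊆ (p.support.image w).erase k1 := by
        intro x hx
        obtain ⟨s, hs, rfl⟩ := Finset.mem_image.mp hx
        have hqs := MvPolynomial.mem_support_iff.mp hs
        rw [hcoq s] at hqs
        have h1 : (2:ℂ)^(w s) - (2:ℂ)^k1 ≠ 0 := fun h => hqs (by rw [h, zero_mul])
        have h2 : p.coeff s ≠ 0 := fun h => hqs (by rw [h, mul_zero])
        refine Finset.mem_erase.mpr ⟨fun h => h1 (by rw [h, sub_self]), Finset.mem_image_of_mem w (MvPolynomial.mem_support_iff.mpr h2)⟩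
      have hcard' : (q.support.image w).card ≤ d := by
        calc (q.support.image w).card ≤ ((p.support.image w).erase k1).card := Finset.card_le_card hsupp
        _ = (p.support.image w).card - 1 := Finset.card_erase_of_mem hk1mem
        _ ≤ d := by omega
      have hcwq : cw w k q ∈ I := ih q hqI hcard' k
      have heq : cw w k q = ((2:ℂ)^k - (2:ℂ)^k1) • cw w k p := by
        apply MvPolynomial.ext
        intro s
        rw [MvPolynomial.coeff_smul, coeff_cw, coeff_cw]
        by_cases h : w s = k
        · rw [if_pos h, if_pos h, hcoq s, h]; rfl
        · rw [if_neg h, if_neg h, smul_zero]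
      have hne : ((2:ℂ)^k - (2:ℂ)^k1) ≠ 0 := sub_ne_zero.mpr (two_zpow_ne (Ne.symm hk1ne))
      have : cw w k p = ((2:ℂ)^k - (2:ℂ)^k1)⁻¹ • cw w k q := by
        rw [heq, smul_smul, inv_mul_cancel₀ hne, one_smul]
      rw [this, MvPolynomial.smul_eq_C_mul]
      exact Ideal.mul_mem_left I _ hcwq

noncomputable def one1 : Fin 4 →₀ ℕ := Finsupp.equivFunOnFinite.symm fun _ => 1

lemma one1_apply (i : Fin 4) : one1 i = 1 := rfl

lemma upoly_eq : upoly = monomial one1 1 := by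
  rw [upoly, Fin.prod_univ_four]
  rw [MvPolynomial.X, MvPolynomial.X, MvPolynomial.X, MvPolynomial.X]
  rw [monomial_mul, monomial_mul, monomial_mul]
  have h1 : (Finsupp.single (0:Fin 4) 1 + Finsupp.single 1 1 + Finsupp.single 2 1 +
      Finsupp.single 3 1) = one1 := by
    ext i
    fin_cases i <;> simp [one1, Finsupp.single_apply]
  rw [h1]
  norm_num

lemma upoly_pow (k : ℕ) : upoly ^ k = monomial (Finsupp.equivFunOnFinite.symm fun _ => k) 1 := by
  rw [upoly_eq, monomial_pow, one_pow]
  have h1 : k • one1 = (Finsupp.equivFunOnFinite.symm fun _ => k) := by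
    ext i
    simp [one1, Finsupp.smul_apply]
  rw [h1]

lemma smul_one1 (k : ℕ) : k • one1 = Finsupp.equivFunOnFinite.symm fun _ => k := by
  ext i
  simp [one1, Finsupp.smul_apply]

lemma structure_lem (s0 : Fin 4 →₀ ℕ) (P : MvPolynomial (Fin 4) ℂ)
    (hclass : ∀ s : Fin 4 →₀ ℕ, P.coeff s ≠ 0 →
      ∀ j : Fin 4, (s j : ℤ) - (s 3 : ℤ) = (s0 j : ℤ) - (s0 3 : ℤ))
    (hs0 : P.coeff s0 ≠ 0) :
    ∃ (β : Fin 4 →₀ ℕ) (g : Polynomial ℂ) (n0 : ℕ),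
      P = monomial β 1 * Polynomial.aeval upoly g ∧ g.coeff n0 ≠ 0 ∧ β + n0 • one1 = s0 := by
  -- choose the coordinate where s0 is minimal
  obtain ⟨i0, -, hi0⟩ := Finset.exists_min_image Finset.univ (fun i => s0 i) ⟨0, Finset.mem_univ 0⟩
  have hi0' : ∀ i, s0 i0 ≤ s0 i := fun i => hi0 i (Finset.mem_univ i)
  set β : Fin 4 →₀ ℕ := Finsupp.equivFunOnFinite.symm (fun i => s0 i - s0 i0) with hβ
  have hβ_apply : ∀ i, β i = s0 i - s0 i0 := fun i => rfl
  -- every exponent in the support is β + (s i0) • one1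
  have hclass' : ∀ s : Fin 4 →₀ ℕ, P.coeff s ≠ 0 → s = β + (s i0) • one1 := by
    intro s hs
    have h := hclass s hs
    ext i
    have h1 := h i
    have h2 := h i0
    have h3 := hβ_apply i
    have h4 := hi0' i
    rw [Finsupp.add_apply, Finsupp.smul_apply, one1_apply, h3, smul_eq_mul, mul_one]
    omega
  set g : Polynomial ℂ := ∑ s ∈ P.support, Polynomial.monomial (s i0) (P.coeff s) with hg
  refine ⟨β, g, s0 i0, ?_, ?_, ?_⟩
  · rw [hg, map_sum]
    conv_lhs => rw [← P.support_sum_monomial_coeff]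
    rw [Finset.mul_sum]
    apply Finset.sum_congr rfl
    intro s hs
    have hcs : P.coeff s ≠ 0 := MvPolynomial.mem_support_iff.mp hs
    rw [Polynomial.aeval_monomial, upoly_pow, ← smul_one1, MvPolynomial.algebraMap_eq,
      ← mul_assoc, mul_comm (monomial β (1:ℂ)) (C (P.coeff s)), mul_assoc, monomial_mul, mul_one]
    rw [C_mul_monomial, mul_one]
    rw [← hclass' s hcs]
  · -- coefficient of g at s0 i0
    rw [hg, Polynomial.finset_sum_coeff]
    rw [Finset.sum_eq_single_of_mem s0 (MvPolynomial.mem_support_iff.mpr hs0)]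
    · rwa [Polynomial.coeff_monomial, if_pos rfl]
    · intro s hs hne
      rw [Polynomial.coeff_monomial]
      by_cases h : s i0 = s0 i0
      · exfalso
        apply hne
        have h1 := hclass' s (MvPolynomial.mem_support_iff.mp hs)
        have h2 := hclass' s0 hs0
        rw [h1, h2, h]
      · rw [if_neg h]
  · rw [← hclass' s0 hs0]

lemma lemB1 (I : Ideal (MvPolynomial (Fin 4) ℂ)) (N : ℕ) (hN : upoly ^ N ∈ I)
    (g : Polynomial ℂ) (hg : g.coeff 0 ≠ 0) (μ : MvPolynomial (Fin 4) ℂ)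
    (hμ : μ * Polynomial.aeval upoly g ∈ I) : μ ∈ I := by
  set c := g.coeff 0 with hc
  set d : Polynomial ℂ := Polynomial.C c - g with hd
  have hXd : Polynomial.X ∣ d := Polynomial.X_dvd_iff.mpr (by simp [hd, hc])
  obtain ⟨e, he⟩ : Polynomial.X ^ N ∣ d ^ N := pow_dvd_pow_of_dvd hXd N
  set x : Polynomial ℂ := Polynomial.C c⁻¹ * d with hx
  set q : Polynomial ℂ := Polynomial.C c⁻¹ * (∑ i ∈ Finset.range N, x ^ i) with hq
  have hgq : g * q = 1 - x ^ N := by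
    have h1 : g = Polynomial.C c * (1 - x) := by
      rw [hx, mul_sub, mul_one, ← mul_assoc, ← Polynomial.C_mul, mul_inv_cancel₀ hg, Polynomial.C_1,
        one_mul, hd]
      ring
    have h2 : (1 - x) * ∑ i ∈ Finset.range N, x ^ i = 1 - x ^ N := by
      have := geom_sum_mul x N
      have h3 := congrArg Neg.neg this
      simp only [neg_sub] at h3
      rw [← h3]; ring
    rw [h1, hq]
    calc Polynomial.C c * (1 - x) * (Polynomial.C c⁻¹ * ∑ i ∈ Finset.range N, x ^ i)
        = (Polynomial.C c * Polynomial.C c⁻¹) * ((1 - x) * ∑ i ∈ Finset.range N, x ^ i) := by ring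
      _ = 1 - x ^ N := by
          rw [← Polynomial.C_mul, mul_inv_cancel₀ hg, Polynomial.C_1, one_mul, h2]
  have hxN : Polynomial.aeval upoly (x ^ N) =
      C ((c⁻¹) ^ N) * (upoly ^ N * Polynomial.aeval upoly e) := by
    rw [hx, mul_pow, he]
    simp only [map_mul, map_pow, Polynomial.aeval_C, Polynomial.aeval_X,
      MvPolynomial.algebraMap_eq, C_pow]
  have key : μ = (μ * Polynomial.aeval upoly g) * Polynomial.aeval upoly q
      + (μ * C ((c⁻¹) ^ N) * Polynomial.aeval upoly e) * upoly ^ N := by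
    have := congrArg (fun z => μ * Polynomial.aeval upoly z) hgq
    simp only [map_mul, map_sub, map_one] at this
    rw [hxN] at this
    linear_combination -this
  rw [key]
  exact Ideal.add_mem I (Ideal.mul_mem_right _ I hμ) (Ideal.mul_mem_left I _ hN)

lemma lemB (I : Ideal (MvPolynomial (Fin 4) ℂ)) (N : ℕ) (hN : upoly ^ N ∈ I) :
    ∀ (n0 : ℕ) (g : Polynomial ℂ), g.coeff n0 ≠ 0 → ∀ (μ : MvPolynomial (Fin 4) ℂ),
      μ * Polynomial.aeval upoly g ∈ I → μ * upoly ^ n0 ∈ I := by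
  intro n0
  induction n0 with
  | zero =>
    intro g hg μ hμ
    rw [pow_zero, mul_one]
    exact lemB1 I N hN g hg μ hμ
  | succ n ih =>
    intro g hg μ hμ
    by_cases h0 : g.coeff 0 = 0
    · have hsplit : g = Polynomial.X * g.divX := by
        conv_lhs => rw [← Polynomial.X_mul_divX_add g]
        rw [h0, map_zero, add_zero]
      have hμ' : (μ * upoly) * Polynomial.aeval upoly g.divX ∈ I := by
        have : μ * Polynomial.aeval upoly g = (μ * upoly) * Polynomial.aeval upoly g.divX := by
          conv_lhs => rw [hsplit]
          simp only [map_mul, Polynomial.aeval_X]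
          ring
        rwa [this] at hμ
      have hg' : g.divX.coeff n ≠ 0 := by rwa [Polynomial.coeff_divX]
      have := ih g.divX hg' (μ * upoly) hμ'
      rwa [mul_assoc, ← pow_succ'] at this
    · exact Ideal.mul_mem_right _ I (lemB1 I N hN g h0 μ hμ)

lemma eval_torusScale' (t : Fin 4 → ℂˣ) (a : Fin 4 → ℂ) (p : MvPolynomial (Fin 4) ℂ) :
    eval a (torusScale' t p) = eval (fun i => (t i : ℂ) * a i) p := by
  have h : (eval a).comp (torusScale' t : MvPolynomial (Fin 4) ℂ →+* MvPolynomial (Fin 4) ℂ)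
      = eval (fun i => (t i : ℂ) * a i) := by
    apply MvPolynomial.ringHom_ext
    · intro c
      simp [torusScale']
    · intro i
      simp [torusScale']
  calc eval a (torusScale' t p)
      = ((eval a).comp (torusScale' t : MvPolynomial (Fin 4) ℂ →+* MvPolynomial (Fin 4) ℂ)) p := rfl
    _ = eval (fun i => (t i : ℂ) * a i) p := by rw [h]

section Case2

abbrev R4 := MvPolynomial (Fin 4) ℂ
abbrev R1 := MvPolynomial (Fin 1) ℂ
abbrev R2' := MvPolynomial (Fin 2) ℂ
abbrev A1 := Localization.Away (X 0 : R1)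
abbrev A2 := Localization.Away ((X 0 : R2') * X 1)

instance : IsDomain A1 :=
  IsLocalization.isDomain_localization
    (powers_le_nonZeroDivisors_of_noZeroDivisors (MvPolynomial.X_ne_zero 0))

instance : IsDomain A2 :=
  IsLocalization.isDomain_localization
    (powers_le_nonZeroDivisors_of_noZeroDivisors
      (mul_ne_zero (MvPolynomial.X_ne_zero 0) (MvPolynomial.X_ne_zero 1)))

noncomputable def U1 : A1ˣ :=
  (IsLocalization.Away.algebraMap_isUnit (S := A1) (X 0 : R1)).unit

noncomputable def U2 : A2ˣ :=
  (IsLocalization.Away.algebraMap_isUnit (S := A2) ((X 0 : R2') * X 1)).unit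

noncomputable def κ1 : ℂ →+* A1 := (algebraMap R1 A1).comp (C : ℂ →+* R1)
noncomputable def κ2 : ℂ →+* A2 := (algebraMap R2' A2).comp (C : ℂ →+* R2')

noncomputable def ψ0 (a : Fin 4 → ℂ) : R4 →+* A1 :=
  eval₂Hom κ1 ![κ1 (a 0), κ1 (a 1), κ1 (a 2) * algebraMap R1 A1 (X 0), κ1 (a 3) * ((U1)⁻¹ : A1ˣ)]

noncomputable def ψm (a : Fin 4 → ℂ) : R4 →+* A2 :=
  eval₂Hom κ2 ![κ2 (a 0), κ2 (a 1) * algebraMap R2' A2 (X 1),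
    κ2 (a 2) * algebraMap R2' A2 (X 0), κ2 (a 3) * ((U2)⁻¹ : A2ˣ)]

noncomputable def G21 : R2' →+* A1 :=
  eval₂Hom ((algebraMap R1 A1).comp (C : ℂ →+* R1)) ![algebraMap R1 A1 (X 0), 1]

lemma G21_unit : IsUnit (G21 ((X 0 : R2') * X 1)) := by
  rw [map_mul]
  have h0 : G21 (X 0 : R2') = algebraMap R1 A1 (X 0) := by simp [G21]
  have h1 : G21 (X 1 : R2') = 1 := by simp [G21]
  rw [h0, h1, mul_one]
  exact IsLocalization.Away.algebraMap_isUnit (X 0 : R1)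

noncomputable def θ2 : A2 →+* A1 :=
  IsLocalization.Away.lift ((X 0 : R2') * X 1) G21_unit

noncomputable def G10 : R1 →+* ℂ := eval (fun _ => (1 : ℂ))

lemma G10_unit : IsUnit (G10 (X 0 : R1)) := by simp [G10]

noncomputable def θ1 : A1 →+* ℂ := IsLocalization.Away.lift (X 0 : R1) G10_unit

lemma θ2_U2 : θ2 (U2 : A2) = (U1 : A1) := by
  have h : (U2 : A2) = algebraMap R2' A2 ((X 0 : R2') * X 1) := IsUnit.unit_spec _
  have h1 : (U1 : A1) = algebraMap R1 A1 (X 0 : R1) := IsUnit.unit_spec _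
  rw [h, θ2, IsLocalization.Away.lift_eq, map_mul, h1]
  have h2 : G21 (X 0 : R2') = algebraMap R1 A1 (X 0) := by simp [G21]
  have h3 : G21 (X 1 : R2') = 1 := by simp [G21]
  rw [h2, h3, mul_one]

lemma θ2_U2inv : θ2 ((U2)⁻¹ : A2ˣ) = ((U1)⁻¹ : A1ˣ) := by
  symm
  apply Units.inv_eq_of_mul_eq_one_right
  rw [← θ2_U2, ← map_mul, Units.mul_inv, map_one]

lemma θ1_U1 : θ1 (U1 : A1) = 1 := by
  have h1 : (U1 : A1) = algebraMap R1 A1 (X 0 : R1) := IsUnit.unit_spec _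
  rw [h1, θ1, IsLocalization.Away.lift_eq]
  simp [G10]

lemma θ1_U1inv : θ1 ((U1)⁻¹ : A1ˣ) = 1 := by
  have := θ1_U1
  have h2 : θ1 ((U1 : A1) * ((U1)⁻¹ : A1ˣ)) = 1 := by rw [Units.mul_inv, map_one]
  rw [map_mul, this, one_mul] at h2
  exact h2

lemma θ2_comp (a : Fin 4 → ℂ) : θ2.comp (ψm a) = ψ0 a := by
  apply MvPolynomial.ringHom_ext
  · intro c
    have h1 : (ψm a) (C c) = κ2 c := by simp [ψm]
    have h2 : (ψ0 a) (C c) = κ1 c := by simp [ψ0]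
    have h3 : θ2 (κ2 c) = κ1 c := by
      rw [κ2, RingHom.comp_apply, θ2, IsLocalization.Away.lift_eq]
      simp [G21, κ1]
    simp only [RingHom.comp_apply, h1, h2, h3]
  · intro i
    have hG0 : θ2 (algebraMap R2' A2 (X 0)) = algebraMap R1 A1 (X 0) := by
      rw [θ2, IsLocalization.Away.lift_eq]; simp [G21]
    have hG1 : θ2 (algebraMap R2' A2 (X 1)) = 1 := by
      rw [θ2, IsLocalization.Away.lift_eq]; simp [G21]
    have hκ : ∀ c, θ2 (κ2 c) = κ1 c := by
      intro c
      rw [κ2, RingHom.comp_apply, θ2, IsLocalization.Away.lift_eq]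
      simp [G21, κ1]
    fin_cases i <;>
      simp [ψm, ψ0, hκ, hG0, hG1, θ2_U2inv]

lemma θ1_comp (a : Fin 4 → ℂ) : θ1.comp (ψ0 a) = (eval a : R4 →+* ℂ) := by
  apply MvPolynomial.ringHom_ext
  · intro c
    have hκ : θ1 (κ1 c) = c := by
      rw [κ1, RingHom.comp_apply, θ1, IsLocalization.Away.lift_eq]
      simp [G10]
    have h2 : (ψ0 a) (C c) = κ1 c := by simp [ψ0]
    simp only [RingHom.comp_apply, h2, hκ, MvPolynomial.eval_C]
  · intro i
    have hκ : ∀ c, θ1 (κ1 c) = c := by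
      intro c
      rw [κ1, RingHom.comp_apply, θ1, IsLocalization.Away.lift_eq]
      simp [G10]
    have hY : θ1 (algebraMap R1 A1 (X 0)) = 1 := by
      rw [θ1, IsLocalization.Away.lift_eq]; simp [G10]
    fin_cases i <;> simp [ψ0, hκ, hY, θ1_U1inv, θ1_U1]

set_option maxHeartbeats 1000000 in
lemma case2 (I : Ideal R4)
    (hI : ∀ t : Fin 4 → ℂˣ, (∏ i, t i) = 1 → ∀ p ∈ I, torusScale' t p ∈ I)
    (hdim : ringKrullDim (R4 ⧸ I) ≤ 1) : upoly ∈ I.radical := by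
  by_contra hrad
  rw [← MvPolynomial.vanishingIdeal_zeroLocus_eq_radical (K := ℂ),
    MvPolynomial.mem_vanishingIdeal_iff] at hrad
  push_neg at hrad
  obtain ⟨a, haV, hua⟩ := hrad
  change eval a upoly ≠ 0 at hua
  set c := eval a upoly with hc
  have hcprod : c = ∏ i, a i := by
    rw [hc, upoly, map_prod]
    simp
  have hane : ∀ i, a i ≠ 0 := by
    intro i
    have := Finset.prod_ne_zero_iff.mp (hcprod ▸ hua)
    exact this i (Finset.mem_univ i)
  have hkey : I ≤ (Ideal.span {upoly - C c}).radical := by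
    rw [← MvPolynomial.vanishingIdeal_zeroLocus_eq_radical (K := ℂ)]
    intro p hp
    rw [MvPolynomial.mem_vanishingIdeal_iff]
    intro x hx
    change eval x p = 0
    have hxc : (∏ i, x i) = c := by
      have h := (MvPolynomial.mem_zeroLocus_iff.mp hx) _ (Ideal.subset_span (Set.mem_singleton _))
      change eval x (upoly - C c) = 0 at h
      rw [map_sub, upoly, map_prod] at h
      simp only [eval_X, eval_C] at h
      exact sub_eq_zero.mp h
    have hxne : ∀ i, x i ≠ 0 := by
      intro i
      exact Finset.prod_ne_zero_iff.mp (hxc ▸ hua) i (Finset.mem_univ i)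
    set t : Fin 4 → ℂˣ := fun i => Units.mk0 (x i) (hxne i) * (Units.mk0 (a i) (hane i))⁻¹ with ht
    have htprod : (∏ i, t i) = 1 := by
      apply Units.ext
      push_cast [ht]
      simp only [Units.val_mk0, Units.val_inv_eq_inv_val]
      rw [Finset.prod_mul_distrib, Finset.prod_inv_distrib, hxc, ← hcprod]
      exact mul_inv_cancel₀ hua
    have hmem := hI t htprod p hp
    have h0 := MvPolynomial.mem_zeroLocus_iff.mp haV _ hmem
    change eval a (torusScale' t p) = 0 at h0
    rw [eval_torusScale'] at h0
    have hfun : (fun i => ((t i : ℂ)) * a i) = x := by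
      funext i
      have hti : ((t i : ℂ)) = x i * (a i)⁻¹ := by rw [ht]; simp
      rw [hti, mul_assoc, inv_mul_cancel₀ (hane i), mul_one]
    rwa [hfun] at h0
  -- the three primes
  have hinj2 : Function.Injective (algebraMap R2' A2) :=
    IsLocalization.injective A2 (powers_le_nonZeroDivisors_of_noZeroDivisors
      (mul_ne_zero (MvPolynomial.X_ne_zero 0) (MvPolynomial.X_ne_zero 1)))
  have hinj1 : Function.Injective (algebraMap R1 A1) :=
    IsLocalization.injective A1 (powers_le_nonZeroDivisors_of_noZeroDivisors
      (MvPolynomial.X_ne_zero 0))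
  set P0 : Ideal R4 := RingHom.ker (ψm a) with hP0
  set P1 : Ideal R4 := RingHom.ker (ψ0 a) with hP1
  set P2 : Ideal R4 := RingHom.ker (eval a : R4 →+* ℂ) with hP2
  have prime0 : P0.IsPrime := RingHom.ker_isPrime _
  have prime1 : P1.IsPrime := RingHom.ker_isPrime _
  have prime2 : P2.IsPrime := RingHom.ker_isPrime _
  have hUmem : upoly - C c ∈ P0 := by
    rw [hP0, RingHom.mem_ker, map_sub, upoly, map_prod, Fin.prod_univ_four]
    have hC : (ψm a) (C c) = κ2 c := by simp [ψm]
    have hXi : ∀ i : Fin 4, (ψm a) (X i) =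
        ![κ2 (a 0), κ2 (a 1) * algebraMap R2' A2 (X 1), κ2 (a 2) * algebraMap R2' A2 (X 0),
          κ2 (a 3) * ((U2)⁻¹ : A2ˣ)] i := fun i => eval₂Hom_X' _ _ _
    rw [hXi 0, hXi 1, hXi 2, hXi 3, hC]
    simp only [Matrix.cons_val_zero, Matrix.cons_val_one, Matrix.head_cons, Matrix.cons_val_two,
      Matrix.tail_cons, Matrix.cons_val_three]
    have hκc : κ2 c = κ2 (a 0) * κ2 (a 1) * κ2 (a 2) * κ2 (a 3) := by
      rw [hcprod, Fin.prod_univ_four, map_mul, map_mul, map_mul]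
    have hZZ : algebraMap R2' A2 (X 0) * algebraMap R2' A2 (X 1) * ((U2)⁻¹ : A2ˣ) = 1 := by
      have hu : ((U2 : A2ˣ) : A2) = algebraMap R2' A2 ((X 0 : R2') * X 1) := IsUnit.unit_spec _
      rw [← map_mul]
      calc algebraMap R2' A2 ((X 0 : R2') * X 1) * ((U2)⁻¹ : A2ˣ)
          = (U2 : A2) * ((U2)⁻¹ : A2ˣ) := by rw [hu]
        _ = 1 := Units.mul_inv _
    rw [hκc]
    linear_combination (κ2 (a 0) * κ2 (a 1) * κ2 (a 2) * κ2 (a 3)) * hZZ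
  have hI0 : I ≤ P0 := by
    refine le_trans hkey ?_
    rw [Ideal.IsPrime.radical_le_iff prime0]
    rw [Ideal.span_le]
    intro z hz
    rw [Set.mem_singleton_iff] at hz
    rw [hz]
    exact hUmem
  have h01 : P0 ≤ P1 := by
    intro p hp
    rw [hP1, RingHom.mem_ker, ← θ2_comp a, RingHom.comp_apply]
    rw [hP0, RingHom.mem_ker] at hp
    rw [hp, map_zero]
  have h12 : P1 ≤ P2 := by
    intro p hp
    rw [hP2, RingHom.mem_ker, ← θ1_comp a, RingHom.comp_apply]
    rw [hP1, RingHom.mem_ker] at hp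
    rw [hp, map_zero]
  have hX1ne : (X 1 : R2') - 1 ≠ 0 := by
    intro h
    have := congrArg constantCoeff (sub_eq_zero.mp h)
    simp at this
  have hX0ne : (X 0 : R1) - 1 ≠ 0 := by
    intro h
    have := congrArg constantCoeff (sub_eq_zero.mp h)
    simp at this
  have hne01 : P0 ≠ P1 := by
    intro h
    have hw : (X 1 : R4) - C (a 1) ∈ P1 := by
      rw [hP1, RingHom.mem_ker, map_sub]
      have h1 : (ψ0 a) (X 1) = κ1 (a 1) := by simp [ψ0]
      have h2 : (ψ0 a) (C (a 1)) = κ1 (a 1) := by simp [ψ0]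
      rw [h1, h2, sub_self]
    rw [← h] at hw
    rw [hP0, RingHom.mem_ker, map_sub] at hw
    have h1 : (ψm a) (X 1) = κ2 (a 1) * algebraMap R2' A2 (X 1) := by simp [ψm]
    have h2 : (ψm a) (C (a 1)) = κ2 (a 1) := by simp [ψm]
    rw [h1, h2] at hw
    have hκ2 : ∀ z : ℂ, κ2 z = algebraMap R2' A2 (C z) := fun z => rfl
    have : algebraMap R2' A2 (C (a 1) * X 1 - C (a 1)) = 0 := by
      rw [map_sub, map_mul, ← hκ2]
      exact hw
    have hz := hinj2 (by rw [this, map_zero] : algebraMap R2' A2 (C (a 1) * X 1 - C (a 1)) = algebraMap R2' A2 0)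
    have : (C (a 1) : R2') * (X 1 - 1) = 0 := by linear_combination hz
    rcases mul_eq_zero.mp this with h' | h'
    · exact (hane 1) (by simpa using h')
    · exact hX1ne h'
  have hne12 : P1 ≠ P2 := by
    intro h
    have hw : (X 2 : R4) - C (a 2) ∈ P2 := by
      rw [hP2, RingHom.mem_ker, map_sub, eval_X, eval_C, sub_self]
    rw [← h] at hw
    rw [hP1, RingHom.mem_ker, map_sub] at hw
    have h1 : (ψ0 a) (X 2) = κ1 (a 2) * algebraMap R1 A1 (X 0) := by simp [ψ0]
    have h2 : (ψ0 a) (C (a 2)) = κ1 (a 2) := by simp [ψ0]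
    rw [h1, h2] at hw
    have hκ1 : ∀ z : ℂ, κ1 z = algebraMap R1 A1 (C z) := fun z => rfl
    have : algebraMap R1 A1 (C (a 2) * X 0 - C (a 2)) = 0 := by
      rw [map_sub, map_mul, ← hκ1]
      exact hw
    have hz := hinj1 (by rw [this, map_zero] : algebraMap R1 A1 (C (a 2) * X 0 - C (a 2)) = algebraMap R1 A1 0)
    have : (C (a 2) : R1) * (X 0 - 1) = 0 := by linear_combination hz
    rcases mul_eq_zero.mp this with h' | h'
    · exact (hane 2) (by simpa using h')
    · exact hX0ne h'
  -- move to the quotient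
  have hsurj : Function.Surjective (Ideal.Quotient.mk I) := Ideal.Quotient.mk_surjective
  have hmapprime : ∀ (P : Ideal R4), P.IsPrime → I ≤ P → (P.map (Ideal.Quotient.mk I)).IsPrime := by
    intro P hP hIP
    exact Ideal.map_isPrime_of_surjective hsurj (by rw [Ideal.mk_ker]; exact hIP)
  have hcomapmap : ∀ (P : Ideal R4), I ≤ P → (P.map (Ideal.Quotient.mk I)).comap (Ideal.Quotient.mk I) = P := by
    intro P hIP
    rw [Ideal.comap_map_of_surjective _ hsurj]
    have hker : Ideal.comap (Ideal.Quotient.mk I) (⊥ : Ideal (R4 ⧸ I)) = I := by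
      rw [← RingHom.ker_eq_comap_bot, Ideal.mk_ker]
    rw [hker, sup_eq_left.mpr hIP]
  have hltmap : ∀ (P P' : Ideal R4), I ≤ P → I ≤ P' → P < P' →
      P.map (Ideal.Quotient.mk I) < P'.map (Ideal.Quotient.mk I) := by
    intro P P' hIP hIP' hlt
    refine lt_of_le_of_ne (Ideal.map_mono hlt.le) ?_
    intro h
    have := congrArg (Ideal.comap (Ideal.Quotient.mk I)) h
    rw [hcomapmap P hIP, hcomapmap P' hIP'] at this
    exact hlt.ne this
  have hI1 : I ≤ P1 := le_trans hI0 h01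
  have hI2 : I ≤ P2 := le_trans hI1 h12
  set q0 : PrimeSpectrum (R4 ⧸ I) := ⟨P0.map (Ideal.Quotient.mk I), hmapprime P0 prime0 hI0⟩
  set q1 : PrimeSpectrum (R4 ⧸ I) := ⟨P1.map (Ideal.Quotient.mk I), hmapprime P1 prime1 hI1⟩
  set q2 : PrimeSpectrum (R4 ⧸ I) := ⟨P2.map (Ideal.Quotient.mk I), hmapprime P2 prime2 hI2⟩
  have hq01 : q0 < q1 := hltmap P0 P1 hI0 hI1 (lt_of_le_of_ne h01 hne01)
  have hq12 : q1 < q2 := hltmap P1 P2 hI1 hI2 (lt_of_le_of_ne h12 hne12)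
  let ch : LTSeries (PrimeSpectrum (R4 ⧸ I)) :=
    ⟨2, ![q0, q1, q2], by
      intro i
      fin_cases i
      · exact hq01
      · exact hq12⟩
  have hlen := Order.LTSeries.length_le_krullDim ch
  have h2le : (2 : WithBot (WithTop ℕ)) ≤ ringKrullDim (R4 ⧸ I) := by
    rw [ringKrullDim]
    exact_mod_cast hlen
  have : (2 : WithBot (WithTop ℕ)) ≤ 1 := le_trans h2le hdim
  norm_num at this

end Case2

/-- If an ideal `I ⊆ ℂ[x₁,x₂,x₃,x₄]` is invariant under the Calabi–Yau torus
`T = {t ∈ (ℂ*)⁴ : t₁t₂t₃t₄ = 1}` and its vanishing locus has dimension at most `1`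
(expressed as `ringKrullDim (ℂ[x₁,…,x₄]/I) ≤ 1`), then `I` is a monomial ideal. -/
theorem stmt_12 (I : Ideal (MvPolynomial (Fin 4) ℂ))
    (hI : ∀ t : Fin 4 → ℂˣ, (∏ i, t i) = 1 → ∀ p ∈ I, torusScale' t p ∈ I)
    (hdim : ringKrullDim (MvPolynomial (Fin 4) ℂ ⧸ I) ≤ 1) :
    ∃ S : Set (Fin 4 →₀ ℕ), I = Ideal.span ((fun s => monomial s (1 : ℂ)) '' S) := by
  obtain ⟨N, hN⟩ : ∃ N, upoly ^ N ∈ I := Ideal.mem_radical_iff.mp (case2 I hI hdim)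
  have hmono : ∀ p ∈ I, ∀ s0 ∈ p.support, monomial s0 (1:ℂ) ∈ I := by
    intro p hp s0 hs0
    have hw : ∀ j : Fin 4, j ≠ 3 → ∀ (r : ℂˣ) (q : MvPolynomial (Fin 4) ℂ),
        q ∈ I → scW (wj j) r q ∈ I := by
      intro j hj r q hq
      rw [scW_eq_torusScale j hj]
      exact hI (tj j r) (tj_prod j hj r) q hq
    set Q0 := cw (wj 0) (wj 0 s0) p with hQ0
    set Q1 := cw (wj 1) (wj 1 s0) Q0 with hQ1
    set P := cw (wj 2) (wj 2 s0) Q1 with hPdef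
    have hQ0I : Q0 ∈ I := core I (wj 0) (hw 0 (by decide)) _ p hp le_rfl _
    have hQ1I : Q1 ∈ I := core I (wj 1) (hw 1 (by decide)) _ Q0 hQ0I le_rfl _
    have hPI : P ∈ I := core I (wj 2) (hw 2 (by decide)) _ Q1 hQ1I le_rfl _
    have hcoeffP : ∀ s, P.coeff s =
        if wj 0 s = wj 0 s0 ∧ wj 1 s = wj 1 s0 ∧ wj 2 s = wj 2 s0 then p.coeff s else 0 := by
      intro s
      rw [hPdef, coeff_cw, hQ1, coeff_cw, hQ0, coeff_cw]
      by_cases h0 : wj 0 s = wj 0 s0 <;> by_cases h1 : wj 1 s = wj 1 s0 <;>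
        by_cases h2 : wj 2 s = wj 2 s0 <;> simp [h0, h1, h2]
    have hclass : ∀ s : Fin 4 →₀ ℕ, P.coeff s ≠ 0 →
        ∀ j : Fin 4, (s j : ℤ) - (s 3 : ℤ) = (s0 j : ℤ) - (s0 3 : ℤ) := by
      intro s hs j
      rw [hcoeffP s] at hs
      by_cases hcond : wj 0 s = wj 0 s0 ∧ wj 1 s = wj 1 s0 ∧ wj 2 s = wj 2 s0
      · obtain ⟨h0, h1, h2⟩ := hcond
        rw [wj, wj] at h0 h1 h2
        fin_cases j
        · exact h0
        · exact h1
        · exact h2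
        · simp
      · rw [if_neg hcond] at hs
        exact absurd rfl hs
    have hs0P : P.coeff s0 ≠ 0 := by
      rw [hcoeffP s0, if_pos ⟨rfl, rfl, rfl⟩]
      exact MvPolynomial.mem_support_iff.mp hs0
    obtain ⟨β, g, n0, hPeq, hgne, hβs0⟩ := structure_lem s0 P hclass hs0P
    have hfin := lemB I N hN n0 g hgne (monomial β 1) (by rw [← hPeq]; exact hPI)
    rwa [upoly_pow, ← smul_one1, monomial_mul, mul_one, hβs0] at hfin
  refine ⟨{s | monomial s (1:ℂ) ∈ I}, ?_⟩
  apply le_antisymm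
  · intro p hp
    have hsum := p.support_sum_monomial_coeff
    rw [← hsum]
    apply Ideal.sum_mem
    intro s hs
    have h1 : monomial s (p.coeff s) = C (p.coeff s) * monomial s 1 := by
      rw [C_mul_monomial, mul_one]
    rw [h1]
    exact Ideal.mul_mem_left _ _ (Ideal.subset_span ⟨s, hmono p hp s hs, rfl⟩)
  · rw [Ideal.span_le]
    rintro z ⟨s, hs, rfl⟩
    exact hs
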